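/- arXiv:2212.03798 — 2 statements merged into one kernel-verified Lean document; each statement's English description precedes it below -/
import Mathlib

section
/- (Optimism of the deterministic restless estimator.) Let $\mu : \mathbb{N} \to [0,1]$ be non-decreasing and concave with increments $\gamma(s) = \mu(s+1) - \mu(s)$. For rounds $s_1 < s_2 < t$ (the last two pull times and the current round), define $\overline{\mu}(t) = \mu(s_2) + (t - s_2)\frac{\mu(s_2) - \mu(s_1)}{s_2 - s_1}$. Then $\overline{\mu}(t) \ge \mu(t)$ and $\overline{\mu}(t) - \mu(t) \le (t - s_2)\,\gamma(s_1)$. -/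
/-! Concavity makes the increments `γ s = μ (s + 1) - μ s` non-increasing, so every chord slope of
`μ` over `[a, b]` lies between `γ b` and `γ a`. The slope of the last chord `[s₁, s₂]` is therefore
at least `γ s₂`, which dominates the slope over `[s₂, t]`: the linear extrapolation is optimistic.
It is also at most `γ s₁`, and `μ t ≥ μ s₂` by monotonicity, which bounds the overshoot. -/

section ChordSlope

variable {R : Type*} [CommRing R] [LinearOrder R] [IsStrictOrderedRing R] {μ : ℕ → R}

theorem sub_le_mul_increment_of_antitone (hγ : Antitone fun s ↦ μ (s + 1) - μ s) {a b : ℕ}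
    (hab : a ≤ b) : μ b - μ a ≤ ((b : R) - a) * (μ (a + 1) - μ a) := by
  induction b, hab using Nat.le_induction with
  | base => simp
  | succ n hn ih =>
    have hγn : μ (n + 1) - μ n ≤ μ (a + 1) - μ a := hγ hn
    push_cast
    linarith

theorem mul_increment_le_sub_of_antitone (hγ : Antitone fun s ↦ μ (s + 1) - μ s) {a b : ℕ}
    (hab : a ≤ b) : ((b : R) - a) * (μ (b + 1) - μ b) ≤ μ b - μ a := by
  induction b, hab using Nat.le_induction with
  | base => simp
  | succ n hn ih =>
    have hγn : μ (n + 1 + 1) - μ (n + 1) ≤ μ (n + 1) - μ n := hγ n.le_succ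
    have hna : (0 : R) ≤ (n : R) - a := sub_nonneg.mpr (Nat.cast_le.mpr hn)
    have := mul_le_mul_of_nonneg_left hγn hna
    push_cast
    linarith

end ChordSlope

theorem stmt_13_general (μ : ℕ → ℝ)
    (hincr : ∀ s, 0 ≤ μ (s + 1) - μ s)
    (hconc : ∀ s, μ (s + 2) - μ (s + 1) ≤ μ (s + 1) - μ s)
    (s₁ s₂ t : ℕ) (h12 : s₁ < s₂) (h2t : s₂ < t) :
    μ t ≤ μ s₂ + ((t : ℝ) - (s₂ : ℝ)) * ((μ s₂ - μ s₁) / ((s₂ : ℝ) - (s₁ : ℝ))) ∧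
      (μ s₂ + ((t : ℝ) - (s₂ : ℝ)) * ((μ s₂ - μ s₁) / ((s₂ : ℝ) - (s₁ : ℝ)))) - μ t ≤
        ((t : ℝ) - (s₂ : ℝ)) * (μ (s₁ + 1) - μ s₁) := by
  have hγ : Antitone fun s ↦ μ (s + 1) - μ s := antitone_nat_of_succ_le hconc
  have hmono : Monotone μ := monotone_nat_of_le_succ fun s ↦ sub_nonneg.mp (hincr s)
  have hd : (0 : ℝ) < (s₂ : ℝ) - s₁ := sub_pos.mpr (Nat.cast_lt.mpr h12)
  have hts : (0 : ℝ) ≤ (t : ℝ) - s₂ := sub_nonneg.mpr (Nat.cast_le.mpr h2t.le)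
  set slope := (μ s₂ - μ s₁) / ((s₂ : ℝ) - s₁)
  have hslope_ge : μ (s₂ + 1) - μ s₂ ≤ slope :=
    (le_div_iff₀ hd).mpr <| by linarith [mul_increment_le_sub_of_antitone hγ h12.le]
  have hslope_le : slope ≤ μ (s₁ + 1) - μ s₁ :=
    (div_le_iff₀ hd).mpr <| by linarith [sub_le_mul_increment_of_antitone hγ h12.le]
  have hgrowth : μ t - μ s₂ ≤ ((t : ℝ) - s₂) * (μ (s₂ + 1) - μ s₂) :=
    sub_le_mul_increment_of_antitone hγ h2t.le
  constructor
  · linarith [mul_le_mul_of_nonneg_left hslope_ge hts]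
  · linarith [mul_le_mul_of_nonneg_left hslope_le hts, hmono h2t.le]

theorem stmt_13 (μ : ℕ → ℝ) (hrange : ∀ s, μ s ∈ Set.Icc (0 : ℝ) 1)
    (hincr : ∀ s, 0 ≤ μ (s + 1) - μ s)
    (hconc : ∀ s, μ (s + 2) - μ (s + 1) ≤ μ (s + 1) - μ s)
    (s₁ s₂ t : ℕ) (h12 : s₁ < s₂) (h2t : s₂ < t) :
    μ t ≤ μ s₂ + ((t : ℝ) - (s₂ : ℝ)) * ((μ s₂ - μ s₁) / ((s₂ : ℝ) - (s₁ : ℝ))) ∧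
      (μ s₂ + ((t : ℝ) - (s₂ : ℝ)) * ((μ s₂ - μ s₁) / ((s₂ : ℝ) - (s₁ : ℝ)))) - μ t ≤
        ((t : ℝ) - (s₂ : ℝ)) * (μ (s₁ + 1) - μ s₁) :=
  stmt_13_general μ hincr hconc s₁ s₂ t h12 h2t
end

section
/- (Non-learnability of non-concave rested bandits.) Consider the two 2-armed deterministic rested bandits $\bm{\mu}^A$ and $\bm{\mu}^B$ where $\mu_1^A(n) = \mu_1^B(n) = 1/2$ for all $n$, $\mu_2^A(n) = 0$ if $n \le \lfloor T/3 \rfloor$ and $1$ otherwise, and $\mu_2^B(n) = 0$ for all $n$. Then for any (deterministic) policy $\pi$ mapping observed reward histories to arm choices, $\max\{R_{\bm{\mu}^A}(\pi, T), R_{\bm{\mu}^B}(\pi, T)\} \ge \lfloor T/12 \rfloor$, where the regret $R_{\bm{\mu}}(\pi,T)$ is the optimal total payoff minus the total payoff collected by $\pi$. -/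
/-- A deterministic policy: maps the history of (arm pulled, observed reward) pairs
(most recent first) to the next arm to pull. -/
abbrev Policy : Type := List (Fin 2 × ℝ) → Fin 2

/-- The history generated by running policy `π` on the deterministic rested bandit `μ`
for `t` rounds (most recent observation first). Pulling arm `i` for the `n`-th time
yields reward `μ i n`. -/
def plays (π : Policy) (μ : Fin 2 → ℕ → ℝ) : ℕ → List (Fin 2 × ℝ)
  | 0 => []
  | t + 1 =>
    let hist := plays π μ t
    let i := π hist
    let n := (hist.filter fun p => p.1 = i).length + 1
    (i, μ i n) :: hist

/-- The total payoff collected by policy `π` on bandit `μ` over horizon `T`. -/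
noncomputable def totalPayoff (π : Policy) (μ : Fin 2 → ℕ → ℝ) (T : ℕ) : ℝ :=
  ((plays π μ T).map fun p => p.2).sum

/-- The optimal total payoff over horizon `T`. -/
noncomputable def optPayoff (μ : Fin 2 → ℕ → ℝ) (T : ℕ) : ℝ :=
  ⨆ π : Policy, totalPayoff π μ T

/-- Bandit A: arm 0 is constant 1/2; arm 2's payoff is 0 for the first ⌊T/3⌋ pulls
and 1 afterwards. -/
noncomputable def muA (T : ℕ) : Fin 2 → ℕ → ℝ := fun i n =>
  if i = 0 then 1 / 2 else if n ≤ T / 3 then 0 else 1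

/-- Bandit B: arm 0 is constant 1/2; arm 2's payoff is identically 0. -/
noncomputable def muB : Fin 2 → ℕ → ℝ := fun i n =>
  if i = 0 then 1 / 2 else 0

/-!
On both bandits arm `1` pays `0` for its first `⌊T/3⌋` pulls, so a policy that pulls it at most
`⌊T/3⌋` times on `muB` produces the same history on `muA`, where it then misses the payoff
`T - ⌊T/3⌋` of always pulling arm `1` by about `T/6`. A policy that pulls arm `1` more than
`⌊T/3⌋` times on `muB` loses `1/2` per such pull against always pulling arm `0`.
-/

section Bandit

variable (π : Policy) (μ : Fin 2 → ℕ → ℝ)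

def pullCount (i : Fin 2) (t : ℕ) : ℕ :=
  ((plays π μ t).filter fun p => p.1 = i).length

lemma plays_succ (t : ℕ) :
    plays π μ (t + 1) =
      (π (plays π μ t), μ (π (plays π μ t)) (pullCount π μ (π (plays π μ t)) t + 1))
        :: plays π μ t :=
  rfl

lemma pullCount_succ (i : Fin 2) (t : ℕ) :
    pullCount π μ i (t + 1) = pullCount π μ i t + if π (plays π μ t) = i then 1 else 0 := by
  rw [pullCount, plays_succ, List.filter_cons]
  split_ifs <;> simp_all [pullCount]

lemma pullCount_mono (i : Fin 2) : Monotone (pullCount π μ i) :=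
  monotone_nat_of_le_succ fun t => by rw [pullCount_succ]; exact Nat.le_add_right _ _

lemma totalPayoff_succ (t : ℕ) :
    totalPayoff π μ (t + 1) =
      μ (π (plays π μ t)) (pullCount π μ (π (plays π μ t)) t + 1) + totalPayoff π μ t := by
  simp [totalPayoff, plays_succ]

lemma totalPayoff_le {c : ℝ} (hμ : ∀ i n, μ i n ≤ c) (t : ℕ) : totalPayoff π μ t ≤ t * c := by
  induction t with
  | zero => simp [totalPayoff, plays]
  | succ t ih =>
    rw [totalPayoff_succ]
    push_cast
    linarith [hμ (π (plays π μ t)) (pullCount π μ (π (plays π μ t)) t + 1)]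

lemma le_optPayoff {c : ℝ} (hμ : ∀ i n, μ i n ≤ c) (T : ℕ) :
    totalPayoff π μ T ≤ optPayoff μ T :=
  le_ciSup ⟨T * c, by rintro _ ⟨π', rfl⟩; exact totalPayoff_le π' μ hμ T⟩ π

lemma plays_eq_of_agree (ν : Fin 2 → ℕ → ℝ) (t : ℕ)
    (h : ∀ i n, n ≤ pullCount π ν i t → μ i n = ν i n) : plays π μ t = plays π ν t := by
  induction t with
  | zero => rfl
  | succ t ih =>
    have hprev : plays π μ t = plays π ν t :=
      ih fun i n hn => h i n (hn.trans (pullCount_mono π ν i t.le_succ))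
    have hcount : ∀ i, pullCount π μ i t = pullCount π ν i t := fun i => by
      simp only [pullCount, hprev]
    have hpull :
        pullCount π ν (π (plays π ν t)) t + 1 ≤ pullCount π ν (π (plays π ν t)) (t + 1) := by
      simp [pullCount_succ]
    rw [plays_succ, plays_succ, hprev, hcount, h _ _ hpull]

lemma totalPayoff_const (i : Fin 2) (t : ℕ) :
    totalPayoff (fun _ => i) μ t = ∑ n ∈ Finset.range t, μ i (n + 1) := by
  have hcount : ∀ t, pullCount (fun _ => i) μ i t = t := by
    intro t
    induction t with
    | zero => rfl
    | succ t ih => simp [pullCount_succ, ih]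
  induction t with
  | zero => simp [totalPayoff, plays]
  | succ t ih => rw [totalPayoff_succ, ih, hcount, Finset.sum_range_succ, add_comm]

end Bandit

lemma muA_le_one (T : ℕ) (i : Fin 2) (n : ℕ) : muA T i n ≤ 1 := by
  unfold muA; split_ifs <;> norm_num

lemma muB_le_one (i : Fin 2) (n : ℕ) : muB i n ≤ 1 := by
  unfold muB; split_ifs <;> norm_num

lemma totalPayoff_muB (π : Policy) (t : ℕ) :
    totalPayoff π muB t = ((t : ℝ) - pullCount π muB 1 t) / 2 := by
  induction t with
  | zero => simp [totalPayoff, plays, pullCount]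
  | succ t ih =>
    rw [totalPayoff_succ, ih, pullCount_succ]
    generalize π (plays π muB t) = i
    fin_cases i
    · simp [muB]; ring
    · simp [muB]

lemma half_le_optPayoff_muB (T : ℕ) : (T : ℝ) / 2 ≤ optPayoff muB T := by
  have h := le_optPayoff (fun _ => 0) muB muB_le_one T
  simpa [totalPayoff_const, muB, div_eq_mul_inv] using h

lemma le_optPayoff_muA (T : ℕ) : (T : ℝ) - (T / 3 : ℕ) ≤ optPayoff (muA T) T := by
  have h := le_optPayoff (fun _ => 1) (muA T) (muA_le_one T) T
  rw [totalPayoff_const, ← Finset.sum_range_add_sum_Ico _ (Nat.div_le_self T 3)] at h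
  have hlow : ∑ n ∈ Finset.range (T / 3), muA T 1 (n + 1) = 0 :=
    Finset.sum_eq_zero fun n hn => by simp [muA, Nat.succ_le_of_lt (Finset.mem_range.mp hn)]
  have hhigh : ∑ n ∈ Finset.Ico (T / 3) T, muA T 1 (n + 1) = (T : ℝ) - (T / 3 : ℕ) := by
    have hone : ∀ n ∈ Finset.Ico (T / 3) T, muA T 1 (n + 1) = 1 := fun n hn => by
      simp [muA, (Finset.mem_Ico.mp hn).1]
    simp [Finset.sum_congr rfl hone, Nat.cast_sub (Nat.div_le_self T 3)]
  rwa [hlow, hhigh, zero_add] at h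

/-- Non-learnability: any policy suffers regret at least ⌊T/12⌋ on one of the two
non-decreasing (non-concave) deterministic rested bandits. -/
theorem stmt_16 (T : ℕ) (π : Policy) :
    ((T / 12 : ℕ) : ℝ) ≤
      max (optPayoff (muA T) T - totalPayoff π (muA T) T)
          (optPayoff muB T - totalPayoff π muB T) := by
  have hB := totalPayoff_muB π T
  have hoptB := half_le_optPayoff_muB T
  by_cases hfew : pullCount π muB 1 T ≤ T / 3
  · have hsame : plays π (muA T) T = plays π muB T := by
      refine plays_eq_of_agree π _ _ T fun i n hn => ?_
      fin_cases i
      · simp [muA, muB]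
      · simp [muA, muB, hn.trans hfew]
    have hA : totalPayoff π (muA T) T = totalPayoff π muB T := by
      rw [totalPayoff, hsame, totalPayoff]
    have hT : 12 * ((T / 12 : ℕ) : ℝ) + 12 * ((T / 3 : ℕ) : ℝ) ≤ 6 * T := by
      exact_mod_cast (by omega : 12 * (T / 12) + 12 * (T / 3) ≤ 6 * T)
    have hcount_nonneg : (0 : ℝ) ≤ pullCount π muB 1 T := Nat.cast_nonneg _
    refine le_max_of_le_left ?_
    linarith [le_optPayoff_muA T]
  · have hmany : ((T / 3 : ℕ) : ℝ) + 1 ≤ pullCount π muB 1 T := by exact_mod_cast not_le.mp hfew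
    have hT : 2 * ((T / 12 : ℕ) : ℝ) ≤ ((T / 3 : ℕ) : ℝ) + 1 := by
      exact_mod_cast (by omega : 2 * (T / 12) ≤ T / 3 + 1)
    refine le_max_of_le_right ?_
    linarith
end
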